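/- arXiv:1508.00962 — 5 statements merged into one kernel-verified Lean document; each statement's English description precedes it below -/
import Mathlib

section
/- The map K ↦ p^e(K), assigning to each K ∈ (0, 1/ln 2) the unique positive solution of K·p = log₂(1+p), is strictly decreasing. -/
open Real Set

/-- `log (1 + x) / x` is the slope of the secant of the strictly concave `log` from `1` to `1 + x`. -/
lemma strictAntiOn_log_one_add_div : StrictAntiOn (fun x : ℝ => log (1 + x) / x) (Ioi 0) := by
  intro x (hx : 0 < x) y (hy : 0 < y) hxy
  have hslope := strictConcaveOn_log_Ioi.secant_strict_mono (a := 1) (x := 1 + x) (y := 1 + y)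
    (mem_Ioi.2 one_pos) (mem_Ioi.2 (by linarith)) (mem_Ioi.2 (by linarith))
    (by linarith) (by linarith) (by linarith)
  simpa only [log_one, sub_zero, add_sub_cancel_left] using hslope

lemma strictAntiOn_logb_one_add_div {b : ℝ} (hb : 1 < b) :
    StrictAntiOn (fun x : ℝ => logb b (1 + x) / x) (Ioi 0) := by
  intro x hx y hy hxy
  simp only [logb, div_right_comm _ (log b)]
  exact div_lt_div_of_pos_right (strictAntiOn_log_one_add_div hx hy hxy) (log_pos hb)

theorem RPE_strictAnti_general (K₁ K₂ p₁ p₂ : ℝ)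
    (hp₁ : 0 < p₁) (hpe₁ : K₁ * p₁ = Real.logb 2 (1 + p₁))
    (hp₂ : 0 < p₂) (hpe₂ : K₂ * p₂ = Real.logb 2 (1 + p₂))
    (hlt : K₁ < K₂) : p₂ < p₁ := by
  rw [eq_div_of_mul_eq hp₁.ne' hpe₁, eq_div_of_mul_eq hp₂.ne' hpe₂] at hlt
  exact ((strictAntiOn_logb_one_add_div one_lt_two).lt_iff_gt hp₁ hp₂).1 hlt

/-- The map K ↦ p^e(K), assigning to each K ∈ (0, 1/ln 2) the unique positive
solution of K·p = log₂(1+p), is strictly decreasing. -/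
theorem RPE_strictAnti (K₁ K₂ p₁ p₂ : ℝ)
    (hK₁0 : 0 < K₁) (hK₁1 : K₁ < 1 / Real.log 2)
    (hK₂0 : 0 < K₂) (hK₂1 : K₂ < 1 / Real.log 2)
    (hp₁ : 0 < p₁) (hpe₁ : K₁ * p₁ = Real.logb 2 (1 + p₁))
    (hp₂ : 0 < p₂) (hpe₂ : K₂ * p₂ = Real.logb 2 (1 + p₂))
    (hlt : K₁ < K₂) : p₂ < p₁ :=
  RPE_strictAnti_general K₁ K₂ p₁ p₂ hp₁ hpe₁ hp₂ hpe₂ hlt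
end

section
/- Let p : [0, T] → [0, p_max] be Lebesgue integrable with ∫₀^T p(τ)dτ = E > 0, and suppose ∫₀^T log₂(1+p(τ))dτ = K·E where K ∈ [K_min, K_max), K_min = log₂(1+p_max)/p_max, K_max = 1/ln 2. Then T ≥ E/p^e(K), where p^e(K) is the unique positive solution of K·p = log₂(1+p), with equality if and only if p(t) = p^e(K) for almost every t ∈ [0, T]. -/
open MeasureTheory

/-!
`x ↦ log₂ (1 + x)` lies below its tangent line at `p^e`, strictly away from `p^e`. Integrating
over `[0, T]` gives `K E ≤ T K p^e + c (E - p^e T)`, where `c = 1 / ((1 + p^e) ln 2)` is the slope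
of the tangent. By strict concavity and `log₂ 1 = 0`, this slope is smaller than the chord slope
`log₂ (1 + p^e) / p^e = K`, which forces `E ≤ p^e T`; equality makes the integrated tangent
inequality tight, hence `p = p^e` almost everywhere.
-/

namespace Real

variable {b a x : ℝ}

theorem tangent_sub_logb_one_add (hb : 1 < b) (ha : -1 < a) (hx : -1 < x) :
    logb b (1 + a) + ((1 + a) * log b)⁻¹ * (x - a) - logb b (1 + x) =
      ((1 + x) / (1 + a) - 1 - log ((1 + x) / (1 + a))) / log b := by
  have hlogb : log b ≠ 0 := (log_pos hb).ne'
  have ha' : 1 + a ≠ 0 := by linarith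
  rw [log_div (by linarith) ha', logb, logb]
  field_simp
  ring

theorem logb_one_add_le_tangent (hb : 1 < b) (ha : -1 < a) (hx : -1 < x) :
    logb b (1 + x) ≤ logb b (1 + a) + ((1 + a) * log b)⁻¹ * (x - a) := by
  have := div_nonneg (sub_nonneg.2 (log_le_sub_one_of_pos
    (div_pos (by linarith : 0 < 1 + x) (by linarith : 0 < 1 + a)))) (log_pos hb).le
  rw [← tangent_sub_logb_one_add hb ha hx] at this
  linarith

theorem logb_one_add_lt_tangent (hb : 1 < b) (ha : -1 < a) (hx : -1 < x) (hxa : x ≠ a) :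
    logb b (1 + x) < logb b (1 + a) + ((1 + a) * log b)⁻¹ * (x - a) := by
  have hne : (1 + x) / (1 + a) ≠ 1 := by
    rw [Ne, div_eq_one_iff_eq (by linarith)]
    exact fun h ↦ hxa (by linarith)
  have := div_pos (sub_pos.2 (log_lt_sub_one_of_pos
    (div_pos (by linarith : 0 < 1 + x) (by linarith : 0 < 1 + a)) hne)) (log_pos hb)
  rw [← tangent_sub_logb_one_add hb ha hx] at this
  linarith

theorem inv_mul_log_lt_logb_one_add_div (hb : 1 < b) (ha : 0 < a) :
    ((1 + a) * log b)⁻¹ < logb b (1 + a) / a := by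
  have := logb_one_add_lt_tangent hb (by linarith : -1 < a) (by norm_num : (-1 : ℝ) < 0) ha.ne
  rw [add_zero, logb_one] at this
  rw [lt_div_iff₀ ha]
  linarith

end Real

section

variable {α : Type*} [MeasurableSpace α] {μ : Measure α} {p : α → ℝ}

theorem MeasureTheory.Integrable.logb_one_add {b : ℝ} (hb : 1 < b) (hp : Integrable p μ)
    (hp0 : 0 ≤ᵐ[μ] p) : Integrable (fun x ↦ Real.logb b (1 + p x)) μ := by
  refine (hp.div_const (Real.log b)).mono' ?_ ?_
  · exact ((hp.aemeasurable.const_add 1).log.div_const _).aestronglyMeasurable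
  · filter_upwards [hp0] with x (hx : 0 ≤ p x)
    rw [Real.norm_eq_abs, abs_of_nonneg (Real.logb_nonneg hb (by linarith)), Real.logb]
    have := Real.log_le_sub_one_of_pos (by linarith : 0 < 1 + p x)
    exact div_le_div_of_nonneg_right (by linarith) (Real.log_pos hb).le

theorem logb_one_add_ae_le_tangent {b a : ℝ} (hb : 1 < b) (ha : -1 < a) (hp0 : 0 ≤ᵐ[μ] p) :
    (fun x ↦ Real.logb b (1 + p x)) ≤ᵐ[μ]
      fun x ↦ Real.logb b (1 + a) + ((1 + a) * Real.log b)⁻¹ * (p x - a) := by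
  filter_upwards [hp0] with x (hx : 0 ≤ p x)
  exact Real.logb_one_add_le_tangent hb ha (by linarith)

variable [IsFiniteMeasure μ]

theorem MeasureTheory.Integrable.const_add_mul_sub (hp : Integrable p μ) (u c a : ℝ) :
    Integrable (fun x ↦ u + c * (p x - a)) μ :=
  (integrable_const u).add ((hp.sub (integrable_const a)).const_mul c)

theorem integral_const_add_mul_sub (hp : Integrable p μ) (u c a : ℝ) :
    ∫ x, (u + c * (p x - a)) ∂μ =
      μ.real Set.univ * u + c * (∫ x, p x ∂μ - a * μ.real Set.univ) := by
  have hpa : Integrable (fun x ↦ c * (p x - a)) μ := (hp.sub (integrable_const a)).const_mul c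
  rw [integral_add (integrable_const u) hpa, integral_const_mul,
    integral_sub hp (integrable_const a), integral_const, integral_const, smul_eq_mul,
    smul_eq_mul, mul_comm a]

variable {b a : ℝ}

theorem integral_logb_one_add_le (hb : 1 < b) (ha : -1 < a) (hp : Integrable p μ)
    (hp0 : 0 ≤ᵐ[μ] p) :
    ∫ x, Real.logb b (1 + p x) ∂μ ≤
      μ.real Set.univ * Real.logb b (1 + a) +
        ((1 + a) * Real.log b)⁻¹ * (∫ x, p x ∂μ - a * μ.real Set.univ) := by
  rw [← integral_const_add_mul_sub hp]
  exact integral_mono_ae (hp.logb_one_add hb hp0) (hp.const_add_mul_sub _ _ _)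
    (logb_one_add_ae_le_tangent hb ha hp0)

theorem integral_logb_one_add_eq_iff (hb : 1 < b) (ha : -1 < a) (hp : Integrable p μ)
    (hp0 : 0 ≤ᵐ[μ] p) :
    ∫ x, Real.logb b (1 + p x) ∂μ =
        μ.real Set.univ * Real.logb b (1 + a) +
          ((1 + a) * Real.log b)⁻¹ * (∫ x, p x ∂μ - a * μ.real Set.univ) ↔
      p =ᵐ[μ] fun _ ↦ a := by
  rw [← integral_const_add_mul_sub hp, integral_eq_iff_of_ae_le (hp.logb_one_add hb hp0)
    (hp.const_add_mul_sub _ _ _) (logb_one_add_ae_le_tangent hb ha hp0)]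
  constructor
  · intro heq
    filter_upwards [heq, hp0] with x (hx : _ = _) (hx0 : 0 ≤ p x)
    by_contra hxa
    exact (Real.logb_one_add_lt_tangent hb ha (by linarith) hxa).ne hx
  · intro heq
    filter_upwards [heq] with x (hx : p x = a)
    simp [hx]

end

theorem time_optimality_RPE_general (T pmax E K pe : ℝ) (hT : 0 ≤ T)
    (hpe_pos : 0 < pe) (hpe : K * pe = Real.logb 2 (1 + pe))
    (p : ℝ → ℝ)
    (hbound : ∀ t ∈ Set.Icc 0 T, p t ∈ Set.Icc 0 pmax)
    (hint : IntegrableOn p (Set.Icc 0 T))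
    (henergy : ∫ t in Set.Icc 0 T, p t = E)
    (hdata : ∫ t in Set.Icc 0 T, Real.logb 2 (1 + p t) = K * E) :
    E / pe ≤ T ∧
      (T = E / pe ↔ ∀ᵐ t ∂(volume.restrict (Set.Icc 0 T)), p t = pe) := by
  have hb : (1 : ℝ) < 2 := one_lt_two
  have hpe' : (-1 : ℝ) < pe := by linarith
  have hvol : (volume.restrict (Set.Icc (0 : ℝ) T)).real Set.univ = T := by
    rw [measureReal_restrict_apply_univ, Real.volume_real_Icc_of_le hT, sub_zero]
  have hp0 : 0 ≤ᵐ[volume.restrict (Set.Icc 0 T)] p := by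
    filter_upwards [ae_restrict_mem measurableSet_Icc] with t ht using (hbound t ht).1
  have hslope := Real.inv_mul_log_lt_logb_one_add_div hb hpe_pos
  rw [← hpe, mul_div_cancel_right₀ _ hpe_pos.ne'] at hslope
  have hdata_le := integral_logb_one_add_le hb hpe' hint hp0
  rw [hdata, henergy, hvol, ← hpe] at hdata_le
  have hET : E ≤ pe * T := by nlinarith
  refine ⟨(div_le_iff₀ hpe_pos).2 (by linarith), ⟨fun hTE ↦ ?_, fun hae ↦ ?_⟩⟩
  · have hE : E = pe * T := by rw [hTE]; field_simp
    refine (integral_logb_one_add_eq_iff hb hpe' hint hp0).1 ?_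
    rw [hdata, henergy, hvol, ← hpe, hE]
    ring
  · have hE : E = pe * T := by
      rw [← henergy, integral_congr_ae hae, integral_const, hvol, smul_eq_mul, mul_comm]
    rw [hE]; field_simp

/-- Time-optimality of the constant RPE power: if p : [0,T] → [0, p_max] depletes
energy E > 0 and delivers data K·E with K ∈ [K_min, K_max), then T ≥ E/p^e(K), with
equality iff p = p^e(K) almost everywhere on [0, T]. -/
theorem time_optimality_RPE (T pmax E K pe : ℝ) (hT : 0 ≤ T) (hpmax : 0 < pmax)
    (hE : 0 < E)
    (hKmin : Real.logb 2 (1 + pmax) / pmax ≤ K) (hKmax : K < 1 / Real.log 2)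
    (hpe_pos : 0 < pe) (hpe : K * pe = Real.logb 2 (1 + pe))
    (p : ℝ → ℝ)
    (hbound : ∀ t ∈ Set.Icc 0 T, p t ∈ Set.Icc 0 pmax)
    (hint : IntegrableOn p (Set.Icc 0 T))
    (henergy : ∫ t in Set.Icc 0 T, p t = E)
    (hdata : ∫ t in Set.Icc 0 T, Real.logb 2 (1 + p t) = K * E) :
    E / pe ≤ T ∧
      (T = E / pe ↔ ∀ᵐ t ∂(volume.restrict (Set.Icc 0 T)), p t = pe) :=
  time_optimality_RPE_general T pmax E K pe hT hpe_pos hpe p hbound hint henergy hdata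
end

section
/- Let E₀ > 0, Q₀ > 0, p_max > 0, K_min = log₂(1+p_max)/p_max, K_max = 1/ln 2. Suppose there exists a Lebesgue integrable p : [0, T] → [0, p_max] with ∫₀^T p dτ = E₀ - Ẽ and ∫₀^T log₂(1+p) dτ = Q₀ - Q̃ where 0 ≤ Ẽ < E₀ and 0 ≤ Q̃ < Q₀ and T < ∞. Then K_min ≤ (Q₀ - Q̃)/(E₀ - Ẽ) < K_max. Conversely, if 0 ≤ Ẽ < E₀, 0 ≤ Q̃ < Q₀ and K_min ≤ (Q₀ - Q̃)/(E₀ - Ẽ) < K_max, such a schedule exists. -/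
/-!
Write `E = ∫ p` and `L = ∫ ln (1 + p)`; the `log₂` statement is this one rescaled by `ln 2`.
Concavity puts `ln (1 + x)` above its chord on `[0, pmax]`, so `L ≥ (ln (1 + pmax) / pmax) E`,
and `ln (1 + x) < x` for `x > 0` gives `L < E` because `p` cannot vanish a.e. when `E > 0`.
Conversely `x ↦ ln (1 + x) / x` is continuous on `(0, pmax]`, tends to `1` at `0⁺` and equals
`ln (1 + pmax) / pmax` at `pmax`, so every ratio `L / E` in between is attained at some `a`, and
the constant schedule `p ≡ a` run for time `E / a` realises `(E, L)`.
-/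

open MeasureTheory Real Set Filter Topology

namespace Real

lemma log_one_add_le_self {x : ℝ} (hx : -1 < x) : log (1 + x) ≤ x := by
  linarith [log_le_sub_one_of_pos (by linarith : 0 < 1 + x)]

lemma log_one_add_lt_self {x : ℝ} (hx : -1 < x) (hx0 : x ≠ 0) : log (1 + x) < x := by
  linarith [log_lt_sub_one_of_pos (by linarith : 0 < 1 + x) (by simpa using hx0)]

lemma div_mul_le_log_one_add {b x : ℝ} (hb : 0 < b) (hx : 0 ≤ x) (hxb : x ≤ b) :
    log (1 + b) / b * x ≤ log (1 + x) := by
  have h1 : 0 ≤ 1 - x / b := by rw [sub_nonneg, div_le_one hb]; exact hxb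
  have h2 : 0 ≤ x / b := by positivity
  have h := strictConcaveOn_log_Ioi.concaveOn.2 (mem_Ioi.2 one_pos)
    (mem_Ioi.2 (by linarith : (0 : ℝ) < 1 + b)) h1 h2 (sub_add_cancel 1 _)
  simp only [smul_eq_mul, log_one, mul_zero, zero_add] at h
  calc log (1 + b) / b * x = x / b * log (1 + b) := by ring
    _ ≤ log ((1 - x / b) * 1 + x / b * (1 + b)) := h
    _ = log (1 + x) := by congr 1; field_simp; ring

lemma tendsto_log_one_add_div_self :
    Tendsto (fun x => log (1 + x) / x) (𝓝[≠] 0) (𝓝 1) := by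
  simpa [div_eq_inv_mul] using (hasDerivAt_log one_ne_zero).tendsto_slope_zero

end Real

section Integral

variable {α : Type*} [MeasurableSpace α] {μ : Measure α} {p : α → ℝ}

lemma integrable_log_one_add (hp : Integrable p μ) (hp0 : 0 ≤ᵐ[μ] p) :
    Integrable (fun t => log (1 + p t)) μ := by
  refine hp.mono' (measurable_log.comp_aemeasurable
    (aemeasurable_const.add hp.aemeasurable)).aestronglyMeasurable ?_
  filter_upwards [hp0] with t (ht : 0 ≤ p t)
  rw [norm_of_nonneg (log_nonneg (by linarith))]
  exact log_one_add_le_self (by linarith)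

lemma integral_log_one_add_lt (hp : Integrable p μ) (hp0 : 0 ≤ᵐ[μ] p)
    (hpos : 0 < ∫ t, p t ∂μ) :
    ∫ t, log (1 + p t) ∂μ < ∫ t, p t ∂μ := by
  have hlog := integrable_log_one_add hp hp0
  have hgap : 0 ≤ᵐ[μ] fun t => p t - log (1 + p t) := by
    filter_upwards [hp0] with t (ht : 0 ≤ p t)
    exact sub_nonneg.2 (log_one_add_le_self (by linarith))
  have hsupp : Function.support p ≤ᵐ[μ] Function.support fun t => p t - log (1 + p t) := by
    filter_upwards [hp0] with t (ht : 0 ≤ p t) (hpt : p t ≠ 0)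
    exact (sub_pos.2 (log_one_add_lt_self (by linarith) hpt)).ne'
  rw [← sub_pos, ← integral_sub hp hlog,
    integral_pos_iff_support_of_nonneg_ae hgap (hp.sub hlog)]
  exact ((integral_pos_iff_support_of_nonneg_ae hp0 hp).1 hpos).trans_le (measure_mono_ae hsupp)

lemma mul_integral_le_integral_log_one_add {b : ℝ} (hb : 0 < b) (hp : Integrable p μ)
    (hpb : ∀ᵐ t ∂μ, p t ∈ Icc 0 b) :
    log (1 + b) / b * ∫ t, p t ∂μ ≤ ∫ t, log (1 + p t) ∂μ := by
  rw [← integral_const_mul]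
  exact integral_mono_ae (hp.const_mul _) (integrable_log_one_add hp (hpb.mono fun _ ht => ht.1))
    (hpb.mono fun _ ht => div_mul_le_log_one_add hb ht.1 ht.2)

end Integral

lemma exists_log_one_add_eq_mul {b r : ℝ} (hb : 0 < b) (hbr : log (1 + b) / b ≤ r)
    (hr : r < 1) :
    ∃ a ∈ Ioc 0 b, log (1 + a) = r * a := by
  obtain ⟨a₀, hra₀, ha₀⟩ : ∃ a₀, r < log (1 + a₀) / a₀ ∧ a₀ ∈ Ioo 0 b :=
    (((tendsto_log_one_add_div_self.mono_left (nhdsGT_le_nhdsNE 0)).eventually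
      (lt_mem_nhds hr)).and (Ioo_mem_nhdsGT hb)).exists
  have hpos : ∀ a ∈ Icc a₀ b, 0 < a := fun a ha => ha₀.1.trans_le ha.1
  have hcont : ContinuousOn (fun a => log (1 + a) / a) (Icc a₀ b) :=
    (ContinuousOn.log (f := fun a => 1 + a) (by fun_prop) fun a ha => by linarith [hpos a ha]).div
      continuousOn_id fun a ha => (hpos a ha).ne'
  obtain ⟨a, ha, hra⟩ := intermediate_value_Icc' ha₀.2.le hcont ⟨hbr, hra₀.le⟩
  exact ⟨a, ⟨hpos a ha, ha.2⟩, (div_eq_iff (hpos a ha).ne').1 hra⟩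

theorem exists_schedule_iff {b E L : ℝ} (hb : 0 < b) (hE : 0 < E) :
    (∃ T : ℝ, 0 ≤ T ∧ ∃ p : ℝ → ℝ, (∀ t ∈ Icc 0 T, p t ∈ Icc 0 b) ∧ IntegrableOn p (Icc 0 T) ∧
        ∫ t in Icc 0 T, p t = E ∧ ∫ t in Icc 0 T, log (1 + p t) = L) ↔
      log (1 + b) / b ≤ L / E ∧ L / E < 1 := by
  constructor
  · rintro ⟨T, -, p, hpb, hp, hpE, hpL⟩
    have hpb' : ∀ᵐ t ∂volume.restrict (Icc 0 T), p t ∈ Icc 0 b :=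
      ae_restrict_of_forall_mem measurableSet_Icc hpb
    rw [le_div_iff₀ hE, div_lt_one hE, ← hpE, ← hpL]
    exact ⟨mul_integral_le_integral_log_one_add hb hp hpb',
      integral_log_one_add_lt hp (hpb'.mono fun _ ht => ht.1) (hpE ▸ hE)⟩
  · rintro ⟨hbr, hr⟩
    obtain ⟨a, ha, hla⟩ := exists_log_one_add_eq_mul hb hbr hr
    have ha0 : a ≠ 0 := ha.1.ne'
    have hT : 0 ≤ E / a := div_nonneg hE.le ha.1.le
    have hconst (c : ℝ) : ∫ _ in Icc 0 (E / a), c = E / a * c := by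
      rw [setIntegral_const, volume_real_Icc_of_le hT, sub_zero, smul_eq_mul]
    refine ⟨E / a, hT, fun _ => a, fun _ _ => Ioc_subset_Icc_self ha,
      integrableOn_const measure_Icc_lt_top.ne, ?_, ?_⟩
    · rw [hconst, div_mul_cancel₀ _ ha0]
    · rw [hconst, hla]
      field_simp

theorem reachable_set_characterization_general (E₀ Q₀ pmax : ℝ)
    (hpmax : 0 < pmax)
    (Et Qt : ℝ) (hEt' : Et < E₀) :
    ((∃ T : ℝ, 0 ≤ T ∧ ∃ p : ℝ → ℝ,
        (∀ t ∈ Set.Icc 0 T, p t ∈ Set.Icc 0 pmax) ∧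
        IntegrableOn p (Set.Icc 0 T) ∧
        (∫ t in Set.Icc 0 T, p t) = E₀ - Et ∧
        (∫ t in Set.Icc 0 T, Real.logb 2 (1 + p t)) = Q₀ - Qt) →
      Real.logb 2 (1 + pmax) / pmax ≤ (Q₀ - Qt) / (E₀ - Et) ∧
        (Q₀ - Qt) / (E₀ - Et) < 1 / Real.log 2) ∧
    ((Real.logb 2 (1 + pmax) / pmax ≤ (Q₀ - Qt) / (E₀ - Et) ∧
        (Q₀ - Qt) / (E₀ - Et) < 1 / Real.log 2) →
      ∃ T : ℝ, 0 ≤ T ∧ ∃ p : ℝ → ℝ,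
        (∀ t ∈ Set.Icc 0 T, p t ∈ Set.Icc 0 pmax) ∧
        IntegrableOn p (Set.Icc 0 T) ∧
        (∫ t in Set.Icc 0 T, p t) = E₀ - Et ∧
        (∫ t in Set.Icc 0 T, Real.logb 2 (1 + p t)) = Q₀ - Qt) := by
  have hlog2 : 0 < log 2 := log_pos one_lt_two
  rw [logb, div_right_comm, div_le_iff₀ hlog2, lt_div_iff₀ hlog2, div_mul_eq_mul_div]
  simp only [logb, integral_div, div_eq_iff hlog2.ne']
  exact iff_iff_implies_and_implies.1 (exists_schedule_iff hpmax (sub_pos.2 hEt'))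

/-- Reachable-set characterization: a schedule p : [0,T] → [0, p_max] with
∫p = E₀ - Et and ∫log₂(1+p) = Q₀ - Qt (0 ≤ Et < E₀, 0 ≤ Qt < Q₀) exists iff
K_min ≤ (Q₀ - Qt)/(E₀ - Et) < K_max. -/
theorem reachable_set_characterization (E₀ Q₀ pmax : ℝ)
    (hE₀ : 0 < E₀) (hQ₀ : 0 < Q₀) (hpmax : 0 < pmax)
    (Et Qt : ℝ) (hEt : 0 ≤ Et) (hEt' : Et < E₀) (hQt : 0 ≤ Qt) (hQt' : Qt < Q₀) :
    ((∃ T : ℝ, 0 ≤ T ∧ ∃ p : ℝ → ℝ,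
        (∀ t ∈ Set.Icc 0 T, p t ∈ Set.Icc 0 pmax) ∧
        IntegrableOn p (Set.Icc 0 T) ∧
        (∫ t in Set.Icc 0 T, p t) = E₀ - Et ∧
        (∫ t in Set.Icc 0 T, Real.logb 2 (1 + p t)) = Q₀ - Qt) →
      Real.logb 2 (1 + pmax) / pmax ≤ (Q₀ - Qt) / (E₀ - Et) ∧
        (Q₀ - Qt) / (E₀ - Et) < 1 / Real.log 2) ∧
    ((Real.logb 2 (1 + pmax) / pmax ≤ (Q₀ - Qt) / (E₀ - Et) ∧
        (Q₀ - Qt) / (E₀ - Et) < 1 / Real.log 2) →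
      ∃ T : ℝ, 0 ≤ T ∧ ∃ p : ℝ → ℝ,
        (∀ t ∈ Set.Icc 0 T, p t ∈ Set.Icc 0 pmax) ∧
        IntegrableOn p (Set.Icc 0 T) ∧
        (∫ t in Set.Icc 0 T, p t) = E₀ - Et ∧
        (∫ t in Set.Icc 0 T, Real.logb 2 (1 + p t)) = Q₀ - Qt) :=
  reachable_set_characterization_general E₀ Q₀ pmax hpmax Et Qt hEt'
end

section
/- For K ∈ (0, 1/ln 2), the unique positive solution p of K·p = log₂(1+p) is given by p = -(1/(K ln 2))·W₋₁(-K ln 2 · 2^(-K)) - 1, where W₋₁ is the lower real branch of the Lambert W function. -/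
/-!
Put `c = K ln 2` and `u = -c (1 + p)`. Exponentiating, `ln (1 + p) = c p` becomes
`u eᵘ = -c e⁻ᶜ`, so `w` yields a solution. Conversely a positive solution has `c (1 + p) > 1`,
because otherwise `ln (1 + p) > p / (1 + p) ≥ c p`; hence `u ≤ -1`, and `x ↦ x eˣ` is injective
on `(-∞, -1]`, which forces `u = w`.
-/

open Real Set

lemma strictAntiOn_mul_exp_Iic : StrictAntiOn (fun x : ℝ => x * exp x) (Iic (-1)) := by
  refine strictAntiOn_of_deriv_neg (convex_Iic _) (by fun_prop) fun x hx => ?_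
  rw [interior_Iic, mem_Iio] at hx
  have hderiv : HasDerivAt (fun x => x * exp x) (1 * exp x + x * exp x) x :=
    (hasDerivAt_id' x).mul (hasDerivAt_exp x)
  rw [hderiv.deriv, ← add_mul, add_comm]
  exact mul_neg_of_neg_of_pos (by linarith) (exp_pos x)

lemma log_one_add_eq_mul_iff {c p : ℝ} (hc : c ≠ 0) (hp : 0 < 1 + p) :
    log (1 + p) = c * p ↔ -c * (1 + p) * exp (-c * (1 + p)) = -c * exp (-c) :=
  calc log (1 + p) = c * p ↔ log (1 + p) + -c * (1 + p) = -c := by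
        constructor <;> intro h <;> linarith
    _ ↔ exp (log (1 + p) + -c * (1 + p)) = exp (-c) := exp_eq_exp.symm
    _ ↔ (1 + p) * exp (-c * (1 + p)) = exp (-c) := by rw [exp_add, exp_log hp]
    _ ↔ _ := by rw [mul_assoc, mul_right_inj' (neg_ne_zero.2 hc)]

lemma mul_lt_log_one_add {c p : ℝ} (hp : 0 < p) (hcp : c * (1 + p) ≤ 1) :
    c * p < log (1 + p) := by
  have hlog := log_lt_sub_one_of_pos (inv_pos.2 (by linarith : 0 < 1 + p))
    (inv_ne_one.2 (by linarith))
  rw [log_inv] at hlog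
  have hcp' : c * p ≤ p / (1 + p) := by
    rw [le_div_iff₀ (by linarith)]; nlinarith
  have hinv : (1 + p)⁻¹ - 1 = -(p / (1 + p)) := by field_simp; ring
  linarith

lemma mul_eq_logb_iff {b K p x : ℝ} (hb : 1 < b) :
    K * p = logb b x ↔ log x = K * log b * p := by
  rw [logb, eq_div_iff (log_pos hb).ne']
  constructor <;> intro h <;> linarith

/-- For K ∈ (0, 1/ln 2), the unique positive solution p of K·p = log₂(1+p) is
p = -(1/(K ln 2))·W₋₁(-K ln 2 · 2^(-K)) - 1, where W₋₁ is the lower real branch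
of the Lambert W function (characterized by w ≤ -1 and w·e^w = x). -/
theorem RPE_lambertW (K : ℝ) (hK0 : 0 < K) (hK1 : K < 1 / Real.log 2)
    (w : ℝ) (hw_branch : w ≤ -1)
    (hw : w * Real.exp w = -(K * Real.log 2) * (2 : ℝ) ^ (-K)) :
    (0 < -(1 / (K * Real.log 2)) * w - 1 ∧
      K * (-(1 / (K * Real.log 2)) * w - 1) =
        Real.logb 2 (1 + (-(1 / (K * Real.log 2)) * w - 1))) ∧
    ∀ p : ℝ, 0 < p → K * p = Real.logb 2 (1 + p) →
      p = -(1 / (K * Real.log 2)) * w - 1 := by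
  have hlog2 : 0 < log 2 := log_pos one_lt_two
  have hw' : w * exp w = -(K * log 2) * exp (-(K * log 2)) := by
    rw [hw, rpow_def_of_pos two_pos]; ring_nf
  set c := K * log 2
  have hc0 : 0 < c := mul_pos hK0 hlog2
  have hc1 : c < 1 := (lt_div_iff₀ hlog2).1 hK1
  set q := -(1 / c) * w - 1 with hq_def
  have hwq : -c * (1 + q) = w := by rw [hq_def]; field_simp; ring
  have hq : 0 < q := by
    have : 1 < -w / c := (one_lt_div hc0).2 (by linarith)
    linarith [show q = -w / c - 1 by rw [hq_def]; ring]
  have hq_sol : log (1 + q) = c * q :=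
    (log_one_add_eq_mul_iff hc0.ne' (by linarith)).2 (by rw [hwq]; exact hw')
  refine ⟨⟨hq, (mul_eq_logb_iff one_lt_two).2 hq_sol⟩, fun p hp hpK => ?_⟩
  have hp_sol := (mul_eq_logb_iff one_lt_two).1 hpK
  have hcp : 1 < c * (1 + p) := not_le.1 fun h => (mul_lt_log_one_add hp h).ne' hp_sol
  have hwp : -c * (1 + p) = w := strictAntiOn_mul_exp_Iic.injOn (mem_Iic.2 (by linarith)) hw_branch
    (((log_one_add_eq_mul_iff hc0.ne' (by linarith)).1 hp_sol).trans hw'.symm)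
  have h1p := mul_left_cancel₀ (neg_ne_zero.2 hc0.ne') (hwp.trans hwq.symm)
  linarith
end

section
/- Let E₀ > 0, Q₀ > 0, p_max > 0, K_min = log₂(1+p_max)/p_max, K_max = 1/ln 2. If Q₀/E₀ < K_min, then among all reachable points (Ẽ, 0) (i.e., clearing the data queue), the minimum transmission time is achieved at Ẽ = E₀ - Q₀/K_min, with optimal constant power p_max and minimum time Q₀/log₂(1+p_max). -/
/-! Reaching `(Ẽ, 0)` with the equilibrium power `p` takes time `(E₀ - Ẽ) / p = Q₀ / log₂(1 + p)`,
which decreases in `p`; so the fastest reachable point uses `p = p_max`, spending the energy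
`Q₀ / K_min`, and that energy is available exactly when `Q₀ / E₀ < K_min`. -/

open Real

section
variable {Q D p pmax : ℝ}

lemma logb_two_one_add_pos (hp : 0 < p) : 0 < logb 2 (1 + p) :=
  logb_pos one_lt_two (by linarith)

lemma div_eq_div_logb_of_rate_eq (hQ : Q ≠ 0) (hD : D ≠ 0) (hp : p ≠ 0)
    (hrate : Q / D * p = logb 2 (1 + p)) : D / p = Q / logb 2 (1 + p) := by
  rw [← hrate]
  field_simp

lemma div_logb_le_div_logb (hQ : 0 ≤ Q) (hp : 0 < p) (hp_le : p ≤ pmax) :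
    Q / logb 2 (1 + pmax) ≤ Q / logb 2 (1 + p) :=
  div_le_div_of_nonneg_left hQ (logb_two_one_add_pos hp)
    (logb_le_logb_of_le one_lt_two (by linarith) (by linarith))

end

/-- Energy-abundant case (Q₀/E₀ < K_min): among all reachable points (Et, 0), the
minimum transmission time is achieved at Et = E₀ - Q₀/K_min with constant power
p_max and minimum time Q₀/log₂(1+p_max). -/
theorem energy_abundant_min_time (E₀ Q₀ pmax : ℝ)
    (hE₀ : 0 < E₀) (hQ₀ : 0 < Q₀) (hpmax : 0 < pmax)
    (habundant : Q₀ / E₀ < Real.logb 2 (1 + pmax) / pmax) :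
    (0 ≤ E₀ - Q₀ / (Real.logb 2 (1 + pmax) / pmax) ∧
      E₀ - Q₀ / (Real.logb 2 (1 + pmax) / pmax) < E₀) ∧
    (Q₀ / (E₀ - (E₀ - Q₀ / (Real.logb 2 (1 + pmax) / pmax)))) * pmax =
      Real.logb 2 (1 + pmax) ∧
    (E₀ - (E₀ - Q₀ / (Real.logb 2 (1 + pmax) / pmax))) / pmax =
      Q₀ / Real.logb 2 (1 + pmax) ∧
    ∀ Et pe : ℝ, 0 ≤ Et → Et < E₀ → 0 < pe → pe ≤ pmax →
      (Q₀ / (E₀ - Et)) * pe = Real.logb 2 (1 + pe) →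
      Q₀ / Real.logb 2 (1 + pmax) ≤ (E₀ - Et) / pe := by
  set K := logb 2 (1 + pmax) / pmax with hK_def
  have hK : 0 < K := div_pos (logb_two_one_add_pos hpmax) hpmax
  have hspent : Q₀ / K < E₀ := (div_lt_comm₀ hE₀ hK).mp habundant
  have hcancel : E₀ - (E₀ - Q₀ / K) = Q₀ / K := sub_sub_cancel _ _
  refine ⟨⟨by linarith, by linarith [div_pos hQ₀ hK]⟩, ?_, ?_, ?_⟩
  · rw [hcancel, div_div_cancel₀ hQ₀.ne', hK_def, div_mul_cancel₀ _ hpmax.ne']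
  · rw [hcancel, div_div, hK_def, div_mul_cancel₀ _ hpmax.ne']
  · intro Et pe _ hEt hpe hpe_le hrate
    rw [div_eq_div_logb_of_rate_eq hQ₀.ne' (sub_pos.2 hEt).ne' hpe.ne' hrate]
    exact div_logb_le_div_logb hQ₀.le hpe hpe_le
end
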